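/- (Schoenberg's correspondence.) Let γ : ℝ^n → ℝ satisfy γ(0) = 0 and γ(−η) = γ(η) for all η. Then the function η ↦ exp(−t γ(η)) is positive definite on ℝ^n for every t > 0 if and only if γ is conditionally negative definite. -/

import Mathlib

/-- A function `f : E → ℝ` on an additive group `E` is positive definite if for every `n`,
all points `x₁, …, xₙ ∈ E` and all real weights `λ₁, …, λₙ`, one has
`∑ᵢ ∑ⱼ λᵢ λⱼ f (xᵢ - xⱼ) ≥ 0`. -/
def IsPosDefFun {E : Type*} [AddCommGroup E] (f : E → ℝ) : Prop :=
  ∀ (n : ℕ) (x : Fin n → E) (lam : Fin n → ℝ),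
    0 ≤ ∑ i, ∑ j, lam i * lam j * f (x i - x j)

/-- A function `γ : E → ℝ` on an additive group `E` is conditionally negative definite
(a variogram) if `γ 0 = 0`, `γ (-η) = γ η` for all `η`, and for every `n`, all points
`x₁, …, xₙ ∈ E` and all real weights `λ₁, …, λₙ` summing to `0`, one has
`∑ᵢ ∑ⱼ λᵢ λⱼ γ (xᵢ - xⱼ) ≤ 0`. -/
def IsCondNegDefFun {E : Type*} [AddCommGroup E] (γ : E → ℝ) : Prop :=
  γ 0 = 0 ∧ (∀ η, γ (-η) = γ η) ∧
    ∀ (n : ℕ) (x : Fin n → E) (lam : Fin n → ℝ), (∑ i, lam i) = 0 →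
      ∑ i, ∑ j, lam i * lam j * γ (x i - x j) ≤ 0


/-!
Backward direction: for a variogram `γ` and points `xᵢ`, the matrix
`Kᵢⱼ = γ xᵢ + γ xⱼ - γ (xᵢ - xⱼ)` is positive semidefinite. By the Schur product theorem the
entrywise powers of `t • K` are positive semidefinite, hence so is its entrywise exponential
(a power series with nonnegative coefficients), and `exp (-t γ (xᵢ - xⱼ)) = dᵢ dⱼ exp (t Kᵢⱼ)`
with `dᵢ = exp (-t γ xᵢ)` is its Hadamard product with the rank-one matrix `d dᵀ`.

Forward direction: when `∑ λᵢ = 0`, `F t = ∑ᵢⱼ λᵢ λⱼ exp (-t γ (xᵢ - xⱼ))` vanishes at `0` and is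
nonnegative for `t > 0`, so `F' 0 = -∑ᵢⱼ λᵢ λⱼ γ (xᵢ - xⱼ) ≥ 0`.
-/

open Finset Matrix Nat

namespace Matrix

variable {ι : Type*} [Fintype ι]

theorem dotProduct_mulVec_eq_sum (A : Matrix ι ι ℝ) (v : ι → ℝ) :
    v ⬝ᵥ (A *ᵥ v) = ∑ i, ∑ j, v i * v j * A i j := by
  simp only [dotProduct, mulVec, mul_sum]
  exact sum_congr rfl fun i _ => sum_congr rfl fun j _ => by ring

theorem posSemidef_iff_sum_nonneg {A : Matrix ι ι ℝ} (hA : A.IsHermitian) :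
    A.PosSemidef ↔ ∀ v : ι → ℝ, 0 ≤ ∑ i, ∑ j, v i * v j * A i j := by
  simp only [posSemidef_iff_dotProduct_mulVec, star_trivial, dotProduct_mulVec_eq_sum, hA, true_and]

theorem PosSemidef.sum_nonneg {A : Matrix ι ι ℝ} (hA : A.PosSemidef) (v : ι → ℝ) :
    0 ≤ ∑ i, ∑ j, v i * v j * A i j :=
  (posSemidef_iff_sum_nonneg hA.isHermitian).1 hA v

theorem PosSemidef.map_pow {A : Matrix ι ι ℝ} (hA : A.PosSemidef) (k : ℕ) :
    (A.map (· ^ k)).PosSemidef := by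
  induction k with
  | zero =>
    convert posSemidef_vecMulVec_self_star (1 : ι → ℝ) using 1
    ext
    simp [vecMulVec]
  | succ k ih =>
    have hsucc : A.map (· ^ (k + 1)) = A.map (· ^ k) ⊙ A := by
      ext
      simp [pow_succ]
    rw [hsucc]
    exact ih.hadamard hA

theorem PosSemidef.map_exp {A : Matrix ι ι ℝ} (hA : A.PosSemidef) :
    (A.map Real.exp).PosSemidef := by
  refine (posSemidef_iff_sum_nonneg (hA.isHermitian.map Real.exp fun _ => rfl)).2 fun v => ?_
  have hexp (i j : ι) :
      HasSum (fun k => v i * v j * (A i j ^ k / k !)) (v i * v j * Real.exp (A i j)) := by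
    rw [Real.exp_eq_exp_ℝ]
    exact (NormedSpace.expSeries_div_hasSum_exp (A i j)).mul_left _
  refine (hasSum_sum fun i _ => hasSum_sum fun j _ => hexp i j).nonneg fun k => ?_
  simp only [← mul_div_assoc, ← sum_div]
  exact div_nonneg (by simpa using (hA.map_pow k).sum_nonneg v) (by positivity)

end Matrix

theorem HasDerivAt.nonneg_of_le_right {f : ℝ → ℝ} {f' a : ℝ} (hf : HasDerivAt f f' a)
    (h : ∀ t, 0 < t → f a ≤ f (a + t)) : 0 ≤ f' := by
  refine ge_of_tendsto hf.tendsto_slope_zero_right (eventually_nhdsWithin_of_forall fun t ht => ?_)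
  exact smul_nonneg (inv_nonneg.2 (le_of_lt ht)) (sub_nonneg.2 (h t ht))

section

variable {E : Type*} [AddCommGroup E] {γ : E → ℝ}

theorem IsCondNegDefFun.posSemidef_kernel (hγ : IsCondNegDefFun γ) {m : ℕ} (x : Fin m → E) :
    (Matrix.of fun i j => γ (x i) + γ (x j) - γ (x i - x j)).PosSemidef := by
  obtain ⟨h0, hsymm, hcnd⟩ := hγ
  have hherm : (Matrix.of fun i j => γ (x i) + γ (x j) - γ (x i - x j)).IsHermitian := by
    ext i j
    simp only [conjTranspose_apply, of_apply, star_trivial]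
    rw [← neg_sub (x i), hsymm]
    ring
  refine (posSemidef_iff_sum_nonneg hherm).2 fun v => ?_
  set s := ∑ i, v i
  set a := ∑ i, v i * γ (x i)
  -- Adjoining the point `0` with weight `-s` makes the weights sum to zero.
  have h := hcnd (m + 1) (Fin.cons 0 x) (Fin.cons (-s) v) (by simp [Fin.sum_cons, s])
  simp only [Fin.sum_univ_succ, Fin.cons_zero, Fin.cons_succ, sub_zero, zero_sub, h0,
    hsymm, mul_zero, zero_add, sum_add_distrib] at h
  have hexpand : ∑ i, ∑ j, v i * v j * (γ (x i) + γ (x j) - γ (x i - x j)) =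
      a * s + s * a - ∑ i, ∑ j, v i * v j * γ (x i - x j) := by
    simp only [a, s, sum_mul_sum]
    rw [← sum_add_distrib, ← sum_sub_distrib]
    refine sum_congr rfl fun i _ => ?_
    rw [← sum_add_distrib, ← sum_sub_distrib]
    exact sum_congr rfl fun j _ => by ring
  have hleft : ∑ i, v i * -s * γ (x i) = -(a * s) := by
    simp only [a, sum_mul, ← sum_neg_distrib]
    exact sum_congr rfl fun i _ => by ring
  have hright : ∑ i, -s * v i * γ (x i) = -(s * a) := by
    simp only [a, mul_sum, ← sum_neg_distrib]
    exact sum_congr rfl fun i _ => by ring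
  simp only [of_apply]
  linarith

theorem IsCondNegDefFun.isPosDefFun_exp (hγ : IsCondNegDefFun γ) {t : ℝ} (ht : 0 ≤ t) :
    IsPosDefFun fun η => Real.exp (-(t * γ η)) := by
  intro m x lam
  set d : Fin m → ℝ := fun i => Real.exp (-(t * γ (x i)))
  have hpsd := (posSemidef_vecMulVec_self_star d).hadamard
    (((hγ.posSemidef_kernel x).smul ht).map_exp)
  refine (hpsd.sum_nonneg lam).trans_eq (sum_congr rfl fun i _ => sum_congr rfl fun j _ => ?_)
  simp only [hadamard_apply, vecMulVec_apply, star_trivial, map_apply, Matrix.smul_apply, of_apply,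
    smul_eq_mul, d, ← Real.exp_add]
  ring_nf

theorem IsCondNegDefFun.of_isPosDefFun_exp (h0 : γ 0 = 0) (hsymm : ∀ η, γ (-η) = γ η)
    (hexp : ∀ t : ℝ, 0 < t → IsPosDefFun fun η => Real.exp (-(t * γ η))) :
    IsCondNegDefFun γ := by
  refine ⟨h0, hsymm, fun m x lam hlam => ?_⟩
  set F : ℝ → ℝ := fun t => ∑ i, ∑ j, lam i * lam j * Real.exp (-(t * γ (x i - x j)))
  have hF : HasDerivAt F (∑ i, ∑ j, lam i * lam j * -γ (x i - x j)) 0 := by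
    refine HasDerivAt.fun_sum fun i _ => HasDerivAt.fun_sum fun j _ => ?_
    simpa using (((hasDerivAt_id (0 : ℝ)).mul_const (γ (x i - x j))).neg.exp).const_mul
      (lam i * lam j)
  have hF0 : F 0 = 0 := by
    simp [F, ← mul_sum, hlam]
  have := hF.nonneg_of_le_right fun t ht => by simpa [hF0] using hexp t ht m x lam
  simpa [mul_neg, sum_neg_distrib] using this

end

/-- Schoenberg'"'"'s correspondence: for `γ : ℝ^n → ℝ` with `γ 0 = 0` and `γ (-η) = γ η`,
the function `η ↦ exp(−t γ η)` is positive definite for every `t > 0` if and only if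
`γ` is conditionally negative definite. -/
theorem schoenberg_correspondence (n : ℕ) (γ : EuclideanSpace ℝ (Fin n) → ℝ)
    (h0 : γ 0 = 0) (hsymm : ∀ η, γ (-η) = γ η) :
    (∀ t : ℝ, 0 < t → IsPosDefFun (fun η => Real.exp (-(t * γ η)))) ↔
      IsCondNegDefFun γ :=
  ⟨IsCondNegDefFun.of_isPosDefFun_exp h0 hsymm, fun hγ _ ht => hγ.isPosDefFun_exp ht.le⟩
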